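/- arXiv:2206.02121 — 11 statements merged into one kernel-verified Lean document; each statement's English description precedes it below -/
import Mathlib

section
/- The weighted generalized shift σ_{φ,𝔴} : V^Γ → V^Γ is one-to-one if and only if Γ = φ(Γ \ Z). -/
open Function Set

/-- The weighted generalized shift `σ_{φ,𝔴}` on `V^Γ`,
sending `(x_α)_α` to `(𝔴_α • x_{φ(α)})_α`. -/
noncomputable def shiftW {F V Γ : Type*} [Field F] [AddCommGroup V] [Module F V]
    (φ : Γ → Γ) (w : Γ → F) : (Γ → V) →ₗ[F] (Γ → V) where
  toFun x := fun α => w α • x (φ α)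
  map_add' x y := by funext α; simp
  map_smul' c x := by
    funext α
    simp only [Pi.smul_apply, RingHom.id_apply]
    rw [smul_comm]

theorem weighted_generalized_shift_injective_iff
    {F V Γ : Type*} [Field F] [AddCommGroup V] [Module F V] [Nonempty Γ] [Nontrivial V]
    (φ : Γ → Γ) (w : Γ → F) :
    Function.Injective (shiftW (V := V) φ w) ↔
      (Set.univ : Set Γ) = φ '' {α : Γ | w α ≠ 0} := by
  classical
  constructor
  · intro hinj
    ext β
    simp only [mem_univ, true_iff]
    by_contra hβ
    obtain ⟨v, hv⟩ := exists_ne (0 : V)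
    have : shiftW (V := V) φ w (fun γ => if γ = β then v else 0) =
        shiftW (V := V) φ w 0 := by
      funext α
      simp only [shiftW, LinearMap.coe_mk, AddHom.coe_mk, Pi.zero_apply, smul_zero]
      by_cases h : φ α = β
      · have hwα : w α = 0 := by
          by_contra hw
          exact hβ ⟨α, hw, h⟩
        simp [hwα]
      · simp [h]
    have := hinj this
    have := congrFun this β
    simp at this
    exact hv this
  · intro hsurj x y hxy
    funext β
    have hβ : β ∈ φ '' {α : Γ | w α ≠ 0} := hsurj ▸ mem_univ β
    obtain ⟨α, hwα, hφα⟩ := hβ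
    have := congrFun hxy α
    simp only [shiftW, LinearMap.coe_mk, AddHom.coe_mk, hφα] at this
    exact smul_right_injective V hwα this
end

section
/- 0 is an eigenvalue of the weighted generalized shift σ_{φ,𝔴} : V^Γ → V^Γ if and only if φ(Γ \ Z) ≠ Γ. -/
open Function Set

/-- The set of eigenvalues of a linear self-map `T` of `W`:
all `r` such that `T x = r • x` for some nonzero `x`. -/
def Eigen {F W : Type*} [Field F] [AddCommGroup W] [Module F W] (T : W →ₗ[F] W) : Set F :=
  {r | ∃ x : W, x ≠ 0 ∧ T x = r • x}

theorem zero_mem_eigen_iff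
    {F V Γ : Type*} [Field F] [AddCommGroup V] [Module F V] [Nonempty Γ] [Nontrivial V]
    (φ : Γ → Γ) (w : Γ → F) :
    (0 : F) ∈ Eigen (shiftW (V := V) φ w) ↔
      φ '' {α : Γ | w α ≠ 0} ≠ (Set.univ : Set Γ) := by
  constructor
  · rintro ⟨x, hx, hTx⟩ himg
    apply hx
    funext β
    have hβ : β ∈ φ '' {α : Γ | w α ≠ 0} := himg ▸ mem_univ β
    obtain ⟨α, hα, rfl⟩ := hβ
    have := congrFun hTx α
    simp only [shiftW, LinearMap.coe_mk, AddHom.coe_mk, zero_smul, Pi.zero_apply] at this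
    exact (smul_eq_zero.mp this).resolve_left hα
  · intro h
    have hex : ∃ β, β ∉ φ '' {α : Γ | w α ≠ 0} := by
      by_contra hc
      push_neg at hc
      exact h (eq_univ_of_forall hc)
    obtain ⟨β, hβ⟩ := hex
    obtain ⟨v, hv⟩ := exists_ne (0 : V)
    classical
    refine ⟨fun γ => if γ = β then v else 0, ?_, ?_⟩
    · intro h0
      have := congrFun h0 β
      simp at this
      exact hv this
    · funext α
      simp only [shiftW, LinearMap.coe_mk, AddHom.coe_mk, zero_smul, Pi.zero_apply]
      by_cases hw : w α = 0
      · simp [hw]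
      · have : φ α ≠ β := fun he => hβ (he ▸ mem_image_of_mem φ hw)
        simp [this, hw]
end

section
/- If ↓Z = Γ, then Eigen(σ_{φ,𝔴}, V^Γ) ⊆ {0}. -/
open Function Set

/-- `↓Z = ⋃_{n ≥ 0} φ^{-n}(Z)` where `Z = {α : 𝔴_α = 0}`. -/
def downZ {F Γ : Type*} [Field F] (φ : Γ → Γ) (w : Γ → F) : Set Γ :=
  ⋃ n : ℕ, φ^[n] ⁻¹' {α | w α = 0}

theorem eigen_subset_singleton_zero_of_downZ_eq_univ
    {F V Γ : Type*} [Field F] [AddCommGroup V] [Module F V] [Nonempty Γ]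
    (φ : Γ → Γ) (w : Γ → F) (h : downZ φ w = Set.univ) :
    Eigen (shiftW (V := V) φ w) ⊆ {0} := by
  rintro r ⟨x, hx, hTx⟩
  by_contra hr
  simp only [Set.mem_singleton_iff] at hr
  have key : ∀ α, w α • x (φ α) = r • x α := fun α => congrFun hTx α
  have zero : ∀ (n : ℕ) (α : Γ), w (φ^[n] α) = 0 → x α = 0 := by
    intro n
    induction n with
    | zero =>
      intro α h0
      have := key α
      rw [Function.iterate_zero_apply] at h0
      rw [h0, zero_smul] at this
      exact (smul_eq_zero.mp this.symm).resolve_left hr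
    | succ n ih =>
      intro α h0
      rw [Function.iterate_succ_apply] at h0
      have := key α
      rw [ih (φ α) h0, smul_zero] at this
      exact (smul_eq_zero.mp this.symm).resolve_left hr
  apply hx
  funext α
  have hα : α ∈ downZ φ w := h ▸ Set.mem_univ α
  obtain ⟨n, hn⟩ := Set.mem_iUnion.mp hα
  exact zero n α hn
end

section
/- If ↓Z = Γ, then Eigen(σ_{φ,𝔴}, V^Γ) = ∅ in case φ(Γ \ Z) = Γ, and Eigen(σ_{φ,𝔴}, V^Γ) = {0} in case φ(Γ \ Z) ≠ Γ. -/
open Function Set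

theorem eigen_of_downZ_eq_univ
    {F V Γ : Type*} [Field F] [AddCommGroup V] [Module F V] [Nonempty Γ] [Nontrivial V]
    (φ : Γ → Γ) (w : Γ → F) (h : downZ φ w = Set.univ) :
    (φ '' {α : Γ | w α ≠ 0} = Set.univ → Eigen (shiftW (V := V) φ w) = (∅ : Set F)) ∧
    (φ '' {α : Γ | w α ≠ 0} ≠ Set.univ → Eigen (shiftW (V := V) φ w) = {0}) := by
  -- Any eigenvalue is 0.
  have key : ∀ r ∈ Eigen (shiftW (V := V) φ w), r = 0 := by
    rintro r ⟨x, hx, hTx⟩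
    by_contra hr
    apply hx
    have step : ∀ α : Γ, r • x α = w α • x (φ α) := by
      intro α
      have := congrFun hTx α
      simpa [shiftW] using this.symm
    have main : ∀ n : ℕ, ∀ α : Γ, w (φ^[n] α) = 0 → x α = 0 := by
      intro n
      induction n with
      | zero =>
        intro α h0
        simp only [Function.iterate_zero, id_eq] at h0
        have : r • x α = 0 := by rw [step α, h0, zero_smul]
        exact (smul_eq_zero.mp this).resolve_left hr
      | succ n ih =>
        intro α h0
        rw [Function.iterate_succ_apply] at h0
        have hxφ : x (φ α) = 0 := ih (φ α) h0
        have : r • x α = 0 := by rw [step α, hxφ, smul_zero]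
        exact (smul_eq_zero.mp this).resolve_left hr
    funext α
    have hα : α ∈ downZ φ w := h ▸ Set.mem_univ α
    obtain ⟨_, ⟨n, rfl⟩, hn⟩ := hα
    exact main n α hn
  constructor
  · intro hsurj
    ext r
    simp only [Set.mem_empty_iff_false, iff_false]
    rintro hr
    have hr0 := key r hr
    obtain ⟨x, hx, hTx⟩ := hr
    subst hr0
    apply hx
    funext β
    obtain ⟨α, hα, rfl⟩ : β ∈ φ '' {α : Γ | w α ≠ 0} := hsurj ▸ Set.mem_univ β
    have := congrFun hTx α
    simp only [shiftW, LinearMap.coe_mk, AddHom.coe_mk, Pi.smul_apply, zero_smul,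
      Pi.zero_apply] at this
    exact (smul_eq_zero.mp this).resolve_left hα
  · intro hns
    classical
    have : ∃ β : Γ, β ∉ φ '' {α : Γ | w α ≠ 0} := by
      by_contra hc
      push_neg at hc
      exact hns (Set.eq_univ_of_forall hc)
    obtain ⟨β, hβ⟩ := this
    obtain ⟨v, hv⟩ := exists_ne (0 : V)
    ext r
    simp only [Set.mem_singleton_iff]
    constructor
    · exact key r
    · rintro rfl
      refine ⟨fun γ => if γ = β then v else 0, ?_, ?_⟩
      · intro hx0
        have := congrFun hx0 β
        simp at this
        exact hv this
      · funext α
        simp only [shiftW, LinearMap.coe_mk, AddHom.coe_mk, zero_smul, Pi.zero_apply]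
        by_cases hw : w α = 0
        · simp [hw]
        · have : φ α ≠ β := fun he => hβ ⟨α, hw, he⟩
          simp [this]
end

section
/- If g ∈ Γ and the equivalence class g/∼ is contained in ↓Z, then the restricted weighted generalized shift σ_{φ↾_{g/∼}, 𝔴^{g/∼}} : V^{g/∼} → V^{g/∼} has no nonzero eigenvalue, i.e., Eigen(σ_{φ↾_{g/∼}, 𝔴^{g/∼}}, V^{g/∼}) \ {0} = ∅. -/
open Function Set

/-- The equivalence class `g/∼`, where `α ∼ β` iff `φ^n(α) = φ^m(β)` for some `n, m ≥ 1`. -/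
def cls {Γ : Type*} (φ : Γ → Γ) (g : Γ) : Set Γ :=
  {β | ∃ n m : ℕ, 1 ≤ n ∧ 1 ≤ m ∧ φ^[n] β = φ^[m] g}

lemma cls_mapsTo {Γ : Type*} (φ : Γ → Γ) (g : Γ) : Set.MapsTo φ (cls φ g) (cls φ g) := by
  rintro β ⟨n, m, hn, hm, h⟩
  refine ⟨n, m + 1, hn, by omega, ?_⟩
  rw [← Function.iterate_succ_apply, Function.iterate_succ_apply', h]
  exact (Function.iterate_succ_apply' φ m g).symm

/-- The restriction `φ↾_{g/∼} : g/∼ → g/∼`. -/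
def clsRestrict {Γ : Type*} (φ : Γ → Γ) (g : Γ) : cls φ g → cls φ g :=
  fun b => ⟨φ b, cls_mapsTo φ g b.2⟩

/-- The restricted weighted generalized shift `σ_{φ↾_{g/∼}, 𝔴^{g/∼}}` on `V^{g/∼}`. -/
noncomputable def shiftSub {F V Γ : Type*} [Field F] [AddCommGroup V] [Module F V]
    (φ : Γ → Γ) (w : Γ → F) (g : Γ) : (cls φ g → V) →ₗ[F] (cls φ g → V) where
  toFun x := fun b => w b • x (clsRestrict φ g b)
  map_add' x y := by funext b; simp
  map_smul' c x := by
    funext b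
    simp only [Pi.smul_apply, RingHom.id_apply]
    rw [smul_comm]

theorem restricted_shift_no_nonzero_eigenvalue_of_class_subset_downZ
    {F V Γ : Type*} [Field F] [AddCommGroup V] [Module F V] [Nonempty Γ]
    (φ : Γ → Γ) (w : Γ → F) (g : Γ) (h : cls φ g ⊆ downZ φ w) :
    Eigen (shiftSub (V := V) φ w g) \ {0} = (∅ : Set F) := by
  ext r
  simp only [Set.mem_diff, Set.mem_empty_iff_false, iff_false, Set.mem_singleton_iff, not_and,
    not_not]
  rintro ⟨x, hx0, hx⟩
  by_contra hr
  obtain ⟨b, hb⟩ : ∃ b, x b ≠ 0 := by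
    by_contra hc
    push_neg at hc
    exact hx0 (funext hc)
  set pt : ℕ → cls φ g := fun n => (clsRestrict φ g)^[n] b with hpt
  have hcoe : ∀ n, ((pt n : Γ)) = φ^[n] (b : Γ) := by
    intro n
    induction n with
    | zero => rfl
    | succ n ih =>
      simp only [hpt, Function.iterate_succ_apply'] at *
      simp [clsRestrict, ih]
  have key : ∀ n, r ^ n • x b = (∏ i ∈ Finset.range n, w (pt i : Γ)) • x (pt n) := by
    intro n
    induction n with
    | zero => simp [hpt]
    | succ n ih =>
      have step : w (pt n : Γ) • x (clsRestrict φ g (pt n)) = r • x (pt n) := by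
        have := congrFun hx (pt n)
        simpa [shiftSub] using this
      have hnext : clsRestrict φ g (pt n) = pt (n + 1) := by
        simp [hpt, Function.iterate_succ_apply']
      rw [hnext] at step
      calc r ^ (n + 1) • x b = r • (r ^ n • x b) := by rw [← smul_assoc, smul_eq_mul, pow_succ']
        _ = r • ((∏ i ∈ Finset.range n, w (pt i : Γ)) • x (pt n)) := by rw [ih]
        _ = (∏ i ∈ Finset.range n, w (pt i : Γ)) • (r • x (pt n)) := smul_comm _ _ _
        _ = (∏ i ∈ Finset.range n, w (pt i : Γ)) • (w (pt n : Γ) • x (pt (n + 1))) := by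
            rw [step]
        _ = (∏ i ∈ Finset.range (n + 1), w (pt i : Γ)) • x (pt (n + 1)) := by
            rw [Finset.prod_range_succ, ← smul_assoc, smul_eq_mul]
  obtain ⟨_, ⟨n, rfl⟩, hn⟩ := h b.2
  have hw : w (pt n : Γ) = 0 := by rw [hcoe]; exact hn
  have := key (n + 1)
  rw [Finset.prod_range_succ, hw, mul_zero, zero_smul] at this
  exact hb (by simpa [hr] using smul_eq_zero.mp this |>.resolve_left (pow_ne_zero _ hr))
end

section
/- Eigen(σ_{φ,𝔴}, V^Γ) = ⋃_{α∈Γ} Eigen(σ_{φ↾_{α/∼}, 𝔴^{α/∼}}, V^{α/∼}), i.e., the set of eigenvalues of the weighted generalized shift on V^Γ is the union over all equivalence classes of ∼ of the sets of eigenvalues of the restricted weighted generalized shifts. -/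
open Function Set

theorem eigen_eq_iUnion_eigen_restrictions
    {F V Γ : Type*} [Field F] [AddCommGroup V] [Module F V] [Nonempty Γ]
    (φ : Γ → Γ) (w : Γ → F) :
    Eigen (shiftW (V := V) φ w) = ⋃ α : Γ, Eigen (shiftSub (V := V) φ w α) := by
  ext r
  simp only [Set.mem_iUnion]
  constructor
  · rintro ⟨x, hx, hxe⟩
    obtain ⟨α, hα⟩ : ∃ α, x α ≠ 0 := by
      by_contra h
      push_neg at h
      exact hx (funext h)
    refine ⟨α, fun b => x b.1, ?_, ?_⟩
    · intro h
      exact hα (by simpa using congrFun h ⟨α, 1, 1, le_refl 1, le_refl 1, rfl⟩)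
    · funext b
      exact congrFun hxe b.1
  · rintro ⟨α, y, hy, hye⟩
    classical
    refine ⟨fun β => if h : β ∈ cls φ α then y ⟨β, h⟩ else 0, ?_, ?_⟩
    · intro h
      obtain ⟨b, hb⟩ : ∃ b, y b ≠ 0 := by
        by_contra hc
        push_neg at hc
        exact hy (funext hc)
      apply hb
      have := congrFun h b.1
      simpa [b.2] using this
    · funext β
      by_cases h : β ∈ cls φ α
      · have hφ : φ β ∈ cls φ α := cls_mapsTo φ α h
        have := congrFun hye ⟨β, h⟩
        simp only [shiftW, shiftSub, clsRestrict, LinearMap.coe_mk, AddHom.coe_mk,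
          Pi.smul_apply] at this ⊢
        rw [dif_pos h, dif_pos hφ]
        exact this
      · have hφ : φ β ∉ cls φ α := by
          intro hc
          obtain ⟨n, m, hn, hm, heq⟩ := hc
          exact h ⟨n + 1, m, by omega, hm, by
            rwa [Function.iterate_succ_apply]⟩
        simp only [shiftW, LinearMap.coe_mk, AddHom.coe_mk, Pi.smul_apply]
        rw [dif_neg h, dif_neg hφ]
        simp
end

section
/- If W(φ) \ ↓Z ≠ ∅, then Eigen(σ_{φ,𝔴}, V^Γ) = F \ {0} in case φ(Γ \ Z) = Γ, and Eigen(σ_{φ,𝔴}, V^Γ) = F in case φ(Γ \ Z) ≠ Γ. -/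
open Function Set

/-- Wandering points of `φ`: points `α` such that the sequence `(φ^n(α))_{n ≥ 1}` is injective. -/
def wanderSet {Γ : Type*} (φ : Γ → Γ) : Set Γ :=
  {α | Function.Injective fun n : ℕ => φ^[n + 1] α}

/-! Zero is an eigenvalue exactly when some `β` lies outside `φ(Γ \ Z)`: then the indicator of `β`
is killed by the shift, and otherwise every coordinate of a kernel vector is forced to vanish.
A nonzero `r` is an eigenvalue thanks to a wandering point `α₀ ∉ ↓Z`: along its forward orbit the
eigenvalue equation `𝔴_α g(φ α) = r g(α)` can be solved by `g(φ^m α₀) = r^m / 𝔴_{α₀} ⋯ 𝔴_{φ^{m-1} α₀}`,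
and the value at any `α` with `φ^n α = φ^m α₀` is pulled back along `n` steps; two such pairs
`(n, m)` differ by a common shift because the orbit of `α₀` never repeats. -/

section ZeroEigenvalue

variable {F V Γ : Type*} [Field F] [AddCommGroup V] [Module F V]

theorem zero_mem_eigen_shiftW_iff [Nontrivial V] (φ : Γ → Γ) (w : Γ → F) :
    (0 : F) ∈ Eigen (shiftW (V := V) φ w) ↔ φ '' {α | w α ≠ 0} ≠ univ := by
  constructor
  · rintro ⟨x, hx, hker⟩ hsurj
    refine hx (funext fun β => ?_)
    obtain ⟨α, hα, rfl⟩ := hsurj.symm ▸ mem_univ β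
    have hα' : w α • x (φ α) = 0 := by
      have := congrFun hker α
      rwa [zero_smul] at this
    exact (smul_eq_zero.1 hα').resolve_left hα
  · intro hns
    obtain ⟨β, hβ⟩ := (ne_univ_iff_exists_notMem _).1 hns
    obtain ⟨v, hv⟩ := exists_ne (0 : V)
    classical
    let e : Γ → V := Pi.single β v
    refine ⟨e, fun h => hv (by simpa [e] using congrFun h β), funext fun α => ?_⟩
    change w α • e (φ α) = (0 : F) • e α
    rw [zero_smul]
    by_cases hφα : φ α = β
    · have hwα : w α = 0 := by_contra fun hwα => hβ ⟨α, hwα, hφα⟩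
      rw [hwα, zero_smul]
    · rw [show e (φ α) = 0 from Pi.single_eq_of_ne (M := fun _ => V) hφα v, smul_zero]

end ZeroEigenvalue

section NonzeroEigenvalues

variable {F Γ : Type*} [Field F] (φ : Γ → Γ) (w : Γ → F)

/-- `𝔴_α 𝔴_{φ α} ⋯ 𝔴_{φ^{n-1} α}`, the coefficient of `x_{φ^n α}` in `(σ_{φ,𝔴}^n x)_α`. -/
def weightProd (n : ℕ) (α : Γ) : F :=
  ∏ k ∈ Finset.range n, w (φ^[k] α)

theorem weightProd_succ (n : ℕ) (α : Γ) :
    weightProd φ w (n + 1) α = w α * weightProd φ w n (φ α) := by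
  simp only [weightProd, Finset.prod_range_succ', iterate_succ_apply, iterate_zero_apply]
  ring

theorem weightProd_succ' (n : ℕ) (α : Γ) :
    weightProd φ w (n + 1) α = weightProd φ w n α * w (φ^[n] α) :=
  Finset.prod_range_succ _ _

theorem weight_iterate_ne_zero_of_notMem_downZ {α : Γ} (hα : α ∉ downZ φ w) (k : ℕ) :
    w (φ^[k] α) ≠ 0 :=
  fun hk => hα (mem_iUnion.2 ⟨k, hk⟩)

theorem injective_iterate_of_mem_wanderSet {α : Γ} (hα : α ∈ wanderSet φ) :
    Injective fun n : ℕ => φ^[n] α := fun a b hab =>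
  hα (by simp only [iterate_succ_apply'] at hab ⊢; rw [hab])

variable (r : F) (α₀ : Γ)

/-- The value at `α` of the eigenvector for `r`, computed from a pair `(n, m)` with
`φ^n α = φ^m α₀`. -/
def pullbackCoeff (α : Γ) (n m : ℕ) : F :=
  r ^ m * weightProd φ w n α / (r ^ n * weightProd φ w m α₀)

variable {φ w r α₀}

theorem pullbackCoeff_add (hr : r ≠ 0) (hα₀ : α₀ ∉ downZ φ w) {α : Γ} {n m : ℕ}
    (h : φ^[n] α = φ^[m] α₀) (d : ℕ) :
    pullbackCoeff φ w r α₀ α (n + d) (m + d) = pullbackCoeff φ w r α₀ α n m := by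
  induction d with
  | zero => rfl
  | succ d ih =>
    have hd : φ^[n + d] α = φ^[m + d] α₀ := by
      rw [add_comm n, add_comm m, iterate_add_apply, iterate_add_apply, h]
    have hw : r * w (φ^[m + d] α₀) ≠ 0 :=
      mul_ne_zero hr (weight_iterate_ne_zero_of_notMem_downZ φ w hα₀ _)
    rw [← ih, ← add_assoc, ← add_assoc, pullbackCoeff, pullbackCoeff, weightProd_succ',
      weightProd_succ', hd]
    convert mul_div_mul_right _ _ hw using 1
    ring

theorem pullbackCoeff_eq (hr : r ≠ 0) (hα₀ : α₀ ∈ wanderSet φ \ downZ φ w) {α : Γ}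
    {n m n' m' : ℕ} (h : φ^[n] α = φ^[m] α₀) (h' : φ^[n'] α = φ^[m'] α₀) :
    pullbackCoeff φ w r α₀ α n m = pullbackCoeff φ w r α₀ α n' m' := by
  wlog hle : n ≤ n' generalizing n m n' m'
  · exact (this h' h (le_of_not_ge hle)).symm
  obtain ⟨d, rfl⟩ := Nat.exists_eq_add_of_le hle
  obtain rfl : m' = m + d := injective_iterate_of_mem_wanderSet φ hα₀.1 <| by
    simp only [← h', add_comm _ d, iterate_add_apply, h]
  exact (pullbackCoeff_add hr hα₀.2 h d).symm

variable (φ w r α₀)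

open Classical in
noncomputable def orbitEigenCoeff (α : Γ) : F :=
  if h : ∃ p : ℕ × ℕ, φ^[p.1] α = φ^[p.2] α₀ then
    pullbackCoeff φ w r α₀ α h.choose.1 h.choose.2 else 0

variable {φ w r α₀}

theorem orbitEigenCoeff_eq (hr : r ≠ 0) (hα₀ : α₀ ∈ wanderSet φ \ downZ φ w) {α : Γ} {n m : ℕ}
    (h : φ^[n] α = φ^[m] α₀) :
    orbitEigenCoeff φ w r α₀ α = pullbackCoeff φ w r α₀ α n m := by
  have hex : ∃ p : ℕ × ℕ, φ^[p.1] α = φ^[p.2] α₀ := ⟨(n, m), h⟩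
  rw [orbitEigenCoeff, dif_pos hex]
  exact pullbackCoeff_eq hr hα₀ hex.choose_spec h

theorem orbitEigenCoeff_self (hr : r ≠ 0) (hα₀ : α₀ ∈ wanderSet φ \ downZ φ w) :
    orbitEigenCoeff φ w r α₀ α₀ = 1 := by
  simp [orbitEigenCoeff_eq hr hα₀ (n := 0) (m := 0) rfl, pullbackCoeff, weightProd]

theorem weight_mul_orbitEigenCoeff (hr : r ≠ 0) (hα₀ : α₀ ∈ wanderSet φ \ downZ φ w) (α : Γ) :
    w α * orbitEigenCoeff φ w r α₀ (φ α) = r * orbitEigenCoeff φ w r α₀ α := by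
  by_cases hex : ∃ p : ℕ × ℕ, φ^[p.1] (φ α) = φ^[p.2] α₀
  · obtain ⟨⟨n, m⟩, h⟩ := hex
    rw [orbitEigenCoeff_eq hr hα₀ h, orbitEigenCoeff_eq hr hα₀ (n := n + 1) h, pullbackCoeff,
      pullbackCoeff, weightProd_succ, pow_succ]
    field_simp
  · have hex' : ¬ ∃ p : ℕ × ℕ, φ^[p.1] α = φ^[p.2] α₀ := fun ⟨⟨n, m⟩, h⟩ =>
      hex ⟨(n, m + 1), by simp only [← iterate_succ_apply, iterate_succ_apply', h]⟩
    simp only [orbitEigenCoeff, dif_neg hex, dif_neg hex', mul_zero]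

theorem mem_eigen_shiftW_of_ne_zero {V : Type*} [AddCommGroup V] [Module F V] [Nontrivial V]
    (hr : r ≠ 0) (hα₀ : α₀ ∈ wanderSet φ \ downZ φ w) : r ∈ Eigen (shiftW (V := V) φ w) := by
  obtain ⟨v, hv⟩ := exists_ne (0 : V)
  refine ⟨fun α => orbitEigenCoeff φ w r α₀ α • v, fun h => hv ?_, funext fun α => ?_⟩
  · simpa [orbitEigenCoeff_self hr hα₀] using congrFun h α₀
  · change w α • orbitEigenCoeff φ w r α₀ (φ α) • v = r • orbitEigenCoeff φ w r α₀ α • v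
    rw [smul_smul, smul_smul, weight_mul_orbitEigenCoeff hr hα₀]

end NonzeroEigenvalues

theorem eigen_of_wandering_not_subset_downZ_general
    {F V Γ : Type*} [Field F] [AddCommGroup V] [Module F V] [Nontrivial V]
    (φ : Γ → Γ) (w : Γ → F) (h : (wanderSet φ \ downZ φ w).Nonempty) :
    (φ '' {α : Γ | w α ≠ 0} = Set.univ →
      Eigen (shiftW (V := V) φ w) = {r : F | r ≠ 0}) ∧
    (φ '' {α : Γ | w α ≠ 0} ≠ Set.univ →
      Eigen (shiftW (V := V) φ w) = (Set.univ : Set F)) := by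
  obtain ⟨α₀, hα₀⟩ := h
  have hne : ∀ r : F, r ≠ 0 → r ∈ Eigen (shiftW (V := V) φ w) := fun r hr =>
    mem_eigen_shiftW_of_ne_zero hr hα₀
  refine ⟨fun hsurj => ?_, fun hns => ?_⟩
  · ext r
    refine ⟨fun hr (h0 : r = 0) => ?_, hne r⟩
    exact (zero_mem_eigen_shiftW_iff φ w).1 (h0 ▸ hr) hsurj
  · refine eq_univ_of_forall fun r => ?_
    rcases eq_or_ne r 0 with rfl | hr
    · exact (zero_mem_eigen_shiftW_iff φ w).2 hns
    · exact hne r hr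

theorem eigen_of_wandering_not_subset_downZ
    {F V Γ : Type*} [Field F] [AddCommGroup V] [Module F V] [Nonempty Γ] [Nontrivial V]
    (φ : Γ → Γ) (w : Γ → F) (h : (wanderSet φ \ downZ φ w).Nonempty) :
    (φ '' {α : Γ | w α ≠ 0} = Set.univ →
      Eigen (shiftW (V := V) φ w) = {r : F | r ≠ 0}) ∧
    (φ '' {α : Γ | w α ≠ 0} ≠ Set.univ →
      Eigen (shiftW (V := V) φ w) = (Set.univ : Set F)) :=
  eigen_of_wandering_not_subset_downZ_general φ w h
end

section
/- Suppose W(φ) \ ↓Z = ∅, Γ \ ↓Z ≠ ∅, and ∼ = Γ × Γ (i.e., any two points of Γ are ∼-equivalent). Then P(φ) is nonempty, P(φ) ⊆ Γ \ ↓Z, and Γ \ ↓Z ⊆ Q(φ). -/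
open Function Set

/-- Quasi-periodic points of `φ`: points `α` with `φ^n(α) = φ^m(α)` for some `n > m ≥ 1`. -/
def quasiSet {Γ : Type*} (φ : Γ → Γ) : Set Γ :=
  {α | ∃ n m : ℕ, 1 ≤ m ∧ m < n ∧ φ^[n] α = φ^[m] α}

/-- Periodic points of `φ`: points `α` with `φ^n(α) = α` for some `n ≥ 1`. -/
def periodicSet {Γ : Type*} (φ : Γ → Γ) : Set Γ :=
  {α | ∃ n : ℕ, 1 ≤ n ∧ φ^[n] α = α}

/-- `per(α) = min {n ≥ 1 : φ^n(α) = α}` for a periodic point `α`. -/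
noncomputable def perOf {Γ : Type*} (φ : Γ → Γ) (α : Γ) : ℕ :=
  sInf {n : ℕ | 1 ≤ n ∧ φ^[n] α = α}

theorem periodic_nonempty_and_subsets
    {F Γ : Type*} [Field F] [Nonempty Γ] (φ : Γ → Γ) (w : Γ → F)
    (h1 : wanderSet φ \ downZ φ w = ∅)
    (h2 : ((Set.univ : Set Γ) \ downZ φ w).Nonempty)
    (h3 : ∀ α β : Γ, ∃ n m : ℕ, 1 ≤ n ∧ 1 ≤ m ∧ φ^[n] α = φ^[m] β) :
    (periodicSet φ).Nonempty ∧
    periodicSet φ ⊆ (Set.univ : Set Γ) \ downZ φ w ∧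
    (Set.univ : Set Γ) \ downZ φ w ⊆ quasiSet φ := by
  have hmem : ∀ α : Γ, α ∈ downZ φ w ↔ ∃ n : ℕ, w (φ^[n] α) = 0 := by
    intro α
    simp [downZ, Set.mem_iUnion]
  -- any point not in downZ is quasi-periodic
  have hq : ∀ α : Γ, α ∉ downZ φ w → α ∈ quasiSet φ := by
    intro α hα
    by_contra hnq
    have hw : α ∈ wanderSet φ := by
      intro n m hnm
      by_contra hne
      simp only at hnm
      rcases Nat.lt_or_ge n m with h | h
      · exact hnq ⟨m + 1, n + 1, Nat.succ_le_succ (Nat.zero_le n),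
          Nat.succ_lt_succ h, hnm.symm⟩
      · have h' : m < n := lt_of_le_of_ne h fun e => hne e.symm
        exact hnq ⟨n + 1, m + 1, Nat.succ_le_succ (Nat.zero_le m),
          Nat.succ_lt_succ h', hnm⟩
    exact hα (Set.diff_eq_empty.mp h1 hw)
  obtain ⟨α0, -, hα0⟩ := h2
  obtain ⟨n, m, hm1, hmn, heq⟩ := hq α0 hα0
  -- β is a periodic point
  set β := φ^[m] α0 with hβdef
  have hper : φ^[n - m] β = β := by
    rw [hβdef, ← Function.iterate_add_apply, Nat.sub_add_cancel hmn.le, heq]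
  have hβper : β ∈ periodicSet φ := ⟨n - m, Nat.le_sub_of_add_le (by omega), hper⟩
  refine ⟨⟨β, hβper⟩, ?_, fun α hα => hq α hα.2⟩
  -- periodic points avoid downZ
  rintro γ ⟨k, hk1, hkγ⟩
  refine ⟨trivial, fun hγZ => ?_⟩
  obtain ⟨t, ht⟩ := (hmem γ).mp hγZ
  obtain ⟨a, b, ha1, hb1, hab⟩ := h3 α0 γ
  -- choose s with b + s = t + k * (b + t)
  have hble : b ≤ t + k * (b + t) := by nlinarith
  set s := t + k * (b + t) - b with hs
  have hbs : b + s = t + k * (b + t) := by omega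
  have hkper : φ^[k * (b + t)] γ = γ := by
    have : Function.IsPeriodicPt φ (k * (b + t)) γ :=
      Function.IsPeriodicPt.mul_const hkγ (b + t)
    exact this
  have key : φ^[s + a] α0 = φ^[t] γ := by
    rw [Function.iterate_add_apply, hab, ← Function.iterate_add_apply]
    have : s + b = t + k * (b + t) := by omega
    rw [this, Function.iterate_add_apply, hkper]
  exact hα0 ((hmem α0).mpr ⟨s + a, by rw [key]; exact ht⟩)
end

section
/- Suppose g ∈ Q(φ) \ ↓Z. Then the restriction φ_g := φ↾_{g/∼} satisfies: P(φ_g) is nonempty, P(φ_g) ⊆ (g/∼) \ ↓Z, (g/∼) \ ↓Z ⊆ Q(φ_g), and for every θ ∈ P(φ_g), Eigen(σ_{φ↾_{g/∼}, 𝔴^{g/∼}}, V^{g/∼}) \ {0} = {r ∈ F \ {0} : 𝔴_θ · 𝔴_{φ(θ)} ⋯ 𝔴_{φ^{per(θ)−1}(θ)} = r^{per(θ)}}. -/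
open Function Set

/-! Every orbit in the class of `g` passes through every periodic point of the class, and the
class of a quasi-periodic `g` has one. Hence a periodic point of the class is reached from `g`
and lies outside `↓Z` together with `g`. If `x` is an eigenvector for `r ≠ 0`, then
`r ^ k • x b = (w b * ⋯ * w (φ^[k-1] b)) • x (φ^[k] b)`; following an orbit into a periodic `θ`
shows `x θ ≠ 0`, and going once around the cycle of `θ` gives the product condition. Conversely,
under that condition, propagating `x θ = v` backwards along the orbits into `θ` is consistent. -/

section Iterate

variable {α : Type*} {f : α → α}

theorem periodicSet_eq_periodicPts (f : α → α) : periodicSet f = periodicPts f := rfl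

theorem perOf_eq_minimalPeriod {θ : α} (hθ : θ ∈ periodicPts f) :
    perOf f θ = minimalPeriod f θ :=
  le_antisymm (Nat.sInf_le ⟨minimalPeriod_pos_of_mem_periodicPts hθ, iterate_minimalPeriod⟩)
    (by
      obtain ⟨hpos, hper⟩ := Nat.sInf_mem (s := {n | 1 ≤ n ∧ f^[n] θ = θ}) hθ
      exact IsPeriodicPt.minimalPeriod_le hpos hper)

theorem exists_iterate_eq_of_iterate_eq_iterate {θ b : α} (hθ : θ ∈ periodicPts f) {i j : ℕ}
    (h : f^[i] b = f^[j] θ) : ∃ k, f^[k] b = θ := by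
  obtain ⟨p, hp, hpθ⟩ := hθ
  have hj : j ≤ p * j := Nat.le_mul_of_pos_left j hp
  refine ⟨p * j - j + i, ?_⟩
  rw [iterate_add_apply, h, ← iterate_add_apply, Nat.sub_add_cancel hj]
  exact (hpθ.mul_const j).eq

theorem mem_quasiSet_of_iterate_eq_iterate {g b : α} (hg : g ∈ quasiSet f) {i j : ℕ}
    (h : f^[i] b = f^[j] g) : b ∈ quasiSet f := by
  obtain ⟨n, m, hm, hmn, hnm⟩ := hg
  refine ⟨n + i, m + i, by omega, by omega, ?_⟩
  calc f^[n + i] b = f^[n + j] g := by rw [iterate_add_apply, h, ← iterate_add_apply]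
    _ = f^[m + j] g := by rw [add_comm, iterate_add_apply, hnm, ← iterate_add_apply, add_comm]
    _ = f^[m + i] b := by rw [iterate_add_apply, ← h, ← iterate_add_apply]

theorem exists_iterate_mem_periodicPts_of_mem_quasiSet {g : α} (hg : g ∈ quasiSet f) :
    ∃ m, f^[m] g ∈ periodicPts f := by
  obtain ⟨n, m, -, hmn, hnm⟩ := hg
  refine ⟨m, mk_mem_periodicPts (Nat.sub_pos_of_lt hmn) ?_⟩
  rw [IsPeriodicPt, IsFixedPt, ← iterate_add_apply, Nat.sub_add_cancel hmn.le, hnm]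

end Iterate

section HitTime

variable {α : Type*} {f : α → α} {θ b : α}

-- junk value `0` if the orbit of `b` never reaches `θ`
noncomputable def hitTime (f : α → α) (θ b : α) : ℕ :=
  sInf {k | f^[k] b = θ}

theorem iterate_hitTime (h : ∃ k, f^[k] b = θ) : f^[hitTime f θ b] b = θ :=
  Nat.sInf_mem h

theorem hitTime_le {k : ℕ} (h : f^[k] b = θ) : hitTime f θ b ≤ k :=
  Nat.sInf_le h

theorem hitTime_self : hitTime f θ θ = 0 :=
  Nat.le_zero.1 (hitTime_le rfl)

theorem hitTime_apply_add_one (hb : b ≠ θ) (h : ∃ k, f^[k] (f b) = θ) :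
    hitTime f θ (f b) + 1 = hitTime f θ b := by
  have hfb : f^[hitTime f θ (f b) + 1] b = θ := by
    rw [iterate_succ_apply]
    exact iterate_hitTime h
  have hpos : hitTime f θ b ≠ 0 := fun h0 => hb (by simpa [h0] using iterate_hitTime ⟨_, hfb⟩)
  have hge : hitTime f θ (f b) ≤ hitTime f θ b - 1 := hitTime_le <| by
    rw [← iterate_succ_apply, Nat.succ_eq_add_one, Nat.sub_add_cancel (Nat.pos_of_ne_zero hpos)]
    exact iterate_hitTime ⟨_, hfb⟩
  have hle := hitTime_le hfb
  omega

theorem hitTime_apply_self_add_one (h : ∃ k, f^[k] (f θ) = θ) :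
    hitTime f θ (f θ) + 1 = minimalPeriod f θ := by
  obtain ⟨k, hk⟩ := h
  have hpos := minimalPeriod_pos_of_mem_periodicPts (mk_mem_periodicPts k.succ_pos hk)
  refine le_antisymm ?_ (IsPeriodicPt.minimalPeriod_le (Nat.succ_pos _) (iterate_hitTime ⟨k, hk⟩))
  have : hitTime f θ (f θ) ≤ minimalPeriod f θ - 1 := hitTime_le <| by
    rw [← iterate_succ_apply, Nat.succ_eq_add_one, Nat.sub_add_cancel hpos, iterate_minimalPeriod]
  omega

end HitTime

theorem prod_range_succ_iterate_apply {α M : Type*} [CommMonoid M] (f : α → α) (w : α → M)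
    (k : ℕ) (b : α) :
    ∏ j ∈ Finset.range (k + 1), w (f^[j] b) = w b * ∏ j ∈ Finset.range k, w (f^[j] (f b)) := by
  rw [Finset.prod_range_succ', mul_comm]
  rfl

def weightedShift {α R V : Type*} [CommSemiring R] [AddCommMonoid V] [Module R V]
    (f : α → α) (w : α → R) : (α → V) →ₗ[R] (α → V) :=
  LinearMap.pi fun b => w b • LinearMap.proj (f b)

@[simp]
theorem weightedShift_apply {α R V : Type*} [CommSemiring R] [AddCommMonoid V] [Module R V]
    (f : α → α) (w : α → R) (x : α → V) (b : α) : weightedShift f w x b = w b • x (f b) :=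
  rfl

section WeightedShiftEigen

variable {α F V : Type*} [Field F] [AddCommGroup V] [Module F V] {f : α → α} {w : α → F}
  {θ : α} {r : F}

theorem pow_smul_eq_prod_smul_of_weightedShift_eq_smul {x : α → V}
    (hx : weightedShift f w x = r • x) (k : ℕ) (b : α) :
    r ^ k • x b = (∏ j ∈ Finset.range k, w (f^[j] b)) • x (f^[k] b) := by
  induction k generalizing b with
  | zero => simp
  | succ k ih =>
    have hb : w b • x (f b) = r • x b := congrFun hx b
    rw [pow_succ, mul_smul, ← hb, smul_comm, ih, smul_smul, ← prod_range_succ_iterate_apply,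
      iterate_succ_apply]

theorem prod_eq_pow_of_mem_eigen (hreach : ∀ b, ∃ k, f^[k] b = θ) (hr : r ≠ 0)
    (hr' : r ∈ Eigen (weightedShift (V := V) f w)) :
    ∏ i ∈ Finset.range (minimalPeriod f θ), w (f^[i] θ) = r ^ minimalPeriod f θ := by
  obtain ⟨x, hx0, hx⟩ := hr'
  have key := pow_smul_eq_prod_smul_of_weightedShift_eq_smul hx
  obtain ⟨b, hb⟩ := Function.ne_iff.1 hx0
  obtain ⟨k, hk⟩ := hreach b
  have hxθ : x θ ≠ 0 := fun h0 => by
    have := key k b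
    rw [hk, h0, smul_zero] at this
    exact hb ((smul_eq_zero.1 this).resolve_left (pow_ne_zero k hr))
  have hcycle := key (minimalPeriod f θ) θ
  rw [iterate_minimalPeriod] at hcycle
  exact (smul_left_injective F hxθ hcycle).symm

theorem mem_eigen_of_prod_eq_pow [Nontrivial V] (hreach : ∀ b, ∃ k, f^[k] b = θ) (hr : r ≠ 0)
    (hprod : ∏ i ∈ Finset.range (minimalPeriod f θ), w (f^[i] θ) = r ^ minimalPeriod f θ) :
    r ∈ Eigen (weightedShift (V := V) f w) := by
  -- the eigenvector is `c • v`, with `c θ = 1` propagated backwards along the orbits into `θ`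
  obtain ⟨c, hc_def⟩ : ∃ c : α → F, ∀ b,
      c b = (∏ j ∈ Finset.range (hitTime f θ b), w (f^[j] b)) / r ^ hitTime f θ b :=
    ⟨_, fun _ => rfl⟩
  have hcθ : c θ = 1 := by simp [hc_def, hitTime_self]
  have hc : ∀ b, ∏ j ∈ Finset.range (hitTime f θ (f b) + 1), w (f^[j] b) =
      r ^ (hitTime f θ (f b) + 1) * c b := by
    intro b
    by_cases hb : b = θ
    · subst hb
      rw [hitTime_apply_self_add_one (hreach _), hprod, hcθ, mul_one]
    · rw [hitTime_apply_add_one hb (hreach _), hc_def, mul_div_cancel₀ _ (pow_ne_zero _ hr)]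
  have hstep : ∀ b, w b * c (f b) = r * c b := by
    intro b
    have := hc b
    rw [prod_range_succ_iterate_apply, pow_succ] at this
    rw [hc_def (f b), ← mul_div_assoc, this]
    field_simp
  obtain ⟨v, hv⟩ := exists_ne (0 : V)
  refine ⟨fun b => c b • v, fun h => hv ?_, funext fun b => ?_⟩
  · simpa [hcθ] using congrFun h θ
  · simp only [weightedShift_apply, Pi.smul_apply, smul_smul, hstep]

theorem eigen_weightedShift_diff_zero [Nontrivial V] (hreach : ∀ b, ∃ k, f^[k] b = θ) :
    Eigen (weightedShift (V := V) f w) \ {0} =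
      {r | r ≠ 0 ∧
        ∏ i ∈ Finset.range (minimalPeriod f θ), w (f^[i] θ) = r ^ minimalPeriod f θ} := by
  ext r
  exact ⟨fun ⟨hr, hr0⟩ => ⟨hr0, prod_eq_pow_of_mem_eigen hreach hr0 hr⟩,
    fun ⟨hr0, hprod⟩ => ⟨mem_eigen_of_prod_eq_pow hreach hr0 hprod, hr0⟩⟩

end WeightedShiftEigen

section Class

variable {Γ : Type*} (φ : Γ → Γ) (g : Γ)

theorem iterate_mem_cls (k : ℕ) : φ^[k] g ∈ cls φ g :=
  ⟨1, k + 1, le_rfl, by omega, (iterate_succ_apply' φ k g).symm⟩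

theorem exists_iterate_eq_iterate_of_mem_cls {b c : Γ} (hb : b ∈ cls φ g) (hc : c ∈ cls φ g) :
    ∃ i j, φ^[i] b = φ^[j] c := by
  obtain ⟨i, k, -, -, hi⟩ := hb
  obtain ⟨j, l, -, -, hj⟩ := hc
  refine ⟨i + l, j + k, ?_⟩
  rw [add_comm i, iterate_add_apply, hi, add_comm j, iterate_add_apply, hj, ← iterate_add_apply,
    ← iterate_add_apply, add_comm]

theorem coe_clsRestrict_iterate (k : ℕ) (b : cls φ g) :
    ((clsRestrict φ g)^[k] b : Γ) = φ^[k] b :=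
  Semiconj.iterate_right (f := Subtype.val) (fun _ => rfl) k b

variable {φ g}

theorem clsRestrict_iterate_eq_iff {i j : ℕ} {b c : cls φ g} :
    (clsRestrict φ g)^[i] b = (clsRestrict φ g)^[j] c ↔ φ^[i] b = φ^[j] c := by
  rw [Subtype.ext_iff, coe_clsRestrict_iterate, coe_clsRestrict_iterate]

theorem mem_periodicPts_clsRestrict_iff {b : cls φ g} :
    b ∈ periodicPts (clsRestrict φ g) ↔ (b : Γ) ∈ periodicPts φ :=
  exists_congr fun _ => and_congr_right fun _ => clsRestrict_iterate_eq_iff (j := 0)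

theorem mem_quasiSet_clsRestrict_iff {b : cls φ g} :
    b ∈ quasiSet (clsRestrict φ g) ↔ (b : Γ) ∈ quasiSet φ := by
  simp only [quasiSet, mem_ofPred_eq, clsRestrict_iterate_eq_iff]

theorem exists_clsRestrict_iterate_eq {θ : cls φ g} (hθ : θ ∈ periodicPts (clsRestrict φ g))
    (b : cls φ g) : ∃ k, (clsRestrict φ g)^[k] b = θ := by
  obtain ⟨i, j, hij⟩ := exists_iterate_eq_iterate_of_mem_cls φ g b.2 θ.2
  exact exists_iterate_eq_of_iterate_eq_iterate hθ (clsRestrict_iterate_eq_iff.2 hij)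

theorem shiftSub_eq_weightedShift {F V : Type*} [Field F] [AddCommGroup V] [Module F V]
    (w : Γ → F) : shiftSub (V := V) φ w g = weightedShift (clsRestrict φ g) fun b => w b :=
  rfl

end Class

theorem mem_downZ_of_iterate_mem {F Γ : Type*} [Field F] {φ : Γ → Γ} {w : Γ → F} {x : Γ} {k : ℕ}
    (h : φ^[k] x ∈ downZ φ w) : x ∈ downZ φ w := by
  obtain ⟨n, hn⟩ := mem_iUnion.1 h
  exact mem_iUnion.2 ⟨n + k, by rwa [mem_preimage, iterate_add_apply]⟩

theorem restricted_shift_eigen_of_quasiperiodic_outside_downZ_general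
    {F V Γ : Type*} [Field F] [AddCommGroup V] [Module F V] [Nontrivial V]
    (φ : Γ → Γ) (w : Γ → F) (g : Γ) (hg : g ∈ quasiSet φ \ downZ φ w) :
    (periodicSet (clsRestrict φ g)).Nonempty ∧
    periodicSet (clsRestrict φ g) ⊆ {b : cls φ g | (b : Γ) ∉ downZ φ w} ∧
    {b : cls φ g | (b : Γ) ∉ downZ φ w} ⊆ quasiSet (clsRestrict φ g) ∧
    ∀ θ ∈ periodicSet (clsRestrict φ g),
      Eigen (shiftSub (V := V) φ w g) \ {0} =
        {r : F | r ≠ 0 ∧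
          ∏ i ∈ Finset.range (perOf (clsRestrict φ g) θ),
            w (((clsRestrict φ g)^[i] θ : cls φ g) : Γ)
          = r ^ perOf (clsRestrict φ g) θ} := by
  obtain ⟨hgq, hgZ⟩ := hg
  rw [periodicSet_eq_periodicPts]
  refine ⟨?_, ?_, ?_, ?_⟩
  · obtain ⟨m, hm⟩ := exists_iterate_mem_periodicPts_of_mem_quasiSet hgq
    exact ⟨⟨_, iterate_mem_cls φ g m⟩, mem_periodicPts_clsRestrict_iff.2 hm⟩
  · intro θ hθ hθZ
    obtain ⟨i, j, hij⟩ := exists_iterate_eq_iterate_of_mem_cls φ g (iterate_mem_cls φ g 0) θ.2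
    obtain ⟨k, hk⟩ :=
      exists_iterate_eq_of_iterate_eq_iterate (mem_periodicPts_clsRestrict_iff.1 hθ) hij
    exact hgZ (mem_downZ_of_iterate_mem (hk ▸ hθZ))
  · intro b _
    obtain ⟨i, j, hij⟩ := exists_iterate_eq_iterate_of_mem_cls φ g b.2 (iterate_mem_cls φ g 0)
    exact mem_quasiSet_clsRestrict_iff.2 (mem_quasiSet_of_iterate_eq_iterate hgq hij)
  · intro θ hθ
    rw [perOf_eq_minimalPeriod hθ, shiftSub_eq_weightedShift]
    exact eigen_weightedShift_diff_zero (exists_clsRestrict_iterate_eq hθ)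

theorem restricted_shift_eigen_of_quasiperiodic_outside_downZ
    {F V Γ : Type*} [Field F] [AddCommGroup V] [Module F V] [Nonempty Γ] [Nontrivial V]
    (φ : Γ → Γ) (w : Γ → F) (g : Γ) (hg : g ∈ quasiSet φ \ downZ φ w) :
    (periodicSet (clsRestrict φ g)).Nonempty ∧
    periodicSet (clsRestrict φ g) ⊆ {b : cls φ g | (b : Γ) ∉ downZ φ w} ∧
    {b : cls φ g | (b : Γ) ∉ downZ φ w} ⊆ quasiSet (clsRestrict φ g) ∧
    ∀ θ ∈ periodicSet (clsRestrict φ g),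
      Eigen (shiftSub (V := V) φ w g) \ {0} =
        {r : F | r ≠ 0 ∧
          ∏ i ∈ Finset.range (perOf (clsRestrict φ g) θ),
            w (((clsRestrict φ g)^[i] θ : cls φ g) : Γ)
          = r ^ perOf (clsRestrict φ g) θ} :=
  restricted_shift_eigen_of_quasiperiodic_outside_downZ_general φ w g hg
end

section
/- If the weighted generalized shift σ_{φ,𝔴} : V^Γ → V^Γ is a linear isomorphism, then Eigen(σ_{φ,𝔴}, V^Γ) = F \ {0} in case W(φ) ≠ ∅, and Eigen(σ_{φ,𝔴}, V^Γ) = {r ∈ F \ {0} : there exists θ ∈ P(φ) with ∏_{0≤i<per(θ)} 𝔴_{φ^i(θ)} = r^{per(θ)}} in case W(φ) = ∅. -/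
open Function Set

/-!
Along an orbit an eigenvector `x` of `σ_{φ,𝔴}` for `r` obeys `𝔴_α x_{φ α} = r x_α`, so going
once around the cycle of a periodic point `θ` with `x_θ ≠ 0` forces
`∏_{i < per θ} 𝔴_{φ^i θ} = r^{per θ}`. Bijectivity of `σ_{φ,𝔴}` makes every weight nonzero and `φ`
a permutation. Conversely, for `r ≠ 0` the recurrence `c_{n+1} = (r / 𝔴_{φ^n θ}) c_n` has a
solution on `ℤ`, which is periodic with the period of `θ` exactly when the product condition
holds; it then descends to the orbit of `θ` and, extended by zero, is an eigenvector. A wandering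
point has `minimalPeriod = 0`, for which the product condition is empty, so in that case every
`r ≠ 0` is an eigenvalue.
-/

section Dynamics

variable {Γ : Type*} {φ : Γ → Γ} {α : Γ}

lemma minimalPeriod_eq_zero_of_mem_wanderSet (hα : α ∈ wanderSet φ) : minimalPeriod φ α = 0 := by
  rw [minimalPeriod_eq_zero_iff_notMem_periodicPts]
  rintro ⟨n, hn, hper⟩
  have : n = 0 := @hα n 0 (by simp only [iterate_succ_apply', hper.eq, iterate_zero_apply])
  omega

lemma mem_periodicSet_of_notMem_wanderSet (hφ : Injective φ) (hα : α ∉ wanderSet φ) :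
    α ∈ periodicSet φ := by
  simp only [wanderSet, mem_ofPred_eq, Injective, not_forall] at hα
  obtain ⟨m, n, hmn, hne⟩ := hα
  wlog hlt : m < n generalizing m n
  · exact this n m hmn.symm (Ne.symm hne) (by omega)
  refine ⟨n - m, by omega, hφ.iterate (m + 1) ?_⟩
  rw [← iterate_add_apply, show m + 1 + (n - m) = n + 1 by omega]
  exact hmn.symm

lemma perOf_eq_minimalPeriod_s15 (hα : α ∈ periodicSet φ) : perOf φ α = minimalPeriod φ α := by
  obtain ⟨hpos, hper⟩ : 1 ≤ perOf φ α ∧ φ^[perOf φ α] α = α := Nat.sInf_mem hα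
  have hα' : α ∈ periodicPts φ := mk_mem_periodicPts hpos hper
  exact le_antisymm (Nat.sInf_le ⟨minimalPeriod_pos_of_mem_periodicPts hα', iterate_minimalPeriod⟩)
    (IsPeriodicPt.minimalPeriod_le hpos hper)

lemma MulAction.zpow_smul_eq_zpow_smul_iff {G : Type*} [Group G] [MulAction G Γ] (g : G) (m n : ℤ) :
    g ^ m • α = g ^ n • α ↔ (period g α : ℤ) ∣ m - n := by
  rw [← zpow_smul_eq_iff_period_dvd]
  conv_rhs => rw [← smul_left_cancel_iff (g ^ n), ← mul_smul, ← zpow_add, add_sub_cancel]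

end Dynamics

section IntRecurrence

variable {F : Type*} [Field F] {a c : ℤ → F}

lemma exists_int_seq_succ_eq_mul (ha : ∀ n, a n ≠ 0) :
    ∃ c : ℤ → F, c 0 = 1 ∧ ∀ n, c (n + 1) = a n * c n := by
  let c : ℤ → F := fun n => Int.inductionOn' (motive := fun _ => F) n 0 1
    (fun k _ ck => a k * ck) (fun k _ ck => ck / a (k - 1))
  refine ⟨c, Int.inductionOn'_self, fun n => ?_⟩
  rcases le_or_gt 0 n with hn | hn
  · exact Int.inductionOn'_add_one hn
  · have h : c (n + 1 - 1) = c (n + 1) / a (n + 1 - 1) := Int.inductionOn'_sub_one (by omega)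
    rw [add_sub_cancel_right] at h
    rw [h, mul_div_cancel₀ _ (ha n)]

lemma periodic_of_succ_eq_mul (ha : ∀ n, a n ≠ 0) (hc : ∀ n, c (n + 1) = a n * c n) {p : ℕ}
    (hap : Periodic a p) (hprod : ∏ i ∈ Finset.range p, a i = 1) : Periodic c p := by
  have hc_nat : ∀ k : ℕ, c k = (∏ i ∈ Finset.range k, a i) * c 0 := by
    intro k
    induction k with
    | zero => simp
    | succ k ih => rw [Nat.cast_succ, hc, ih, Finset.prod_range_succ, mul_comm _ (a k), mul_assoc]
  -- `c (· + p) - c` solves the same recurrence and vanishes at `0`.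
  have hd : ∀ n, c (n + 1 + p) - c (n + 1) = a n * (c (n + p) - c n) := fun n => by
    rw [add_right_comm, hc, hc, hap, mul_sub]
  intro n
  rw [← sub_eq_zero]
  induction n using Int.induction_on with
  | zero => rw [zero_add, hc_nat, hprod, one_mul, sub_self]
  | succ n ih => rw [hd, ih, mul_zero]
  | pred n ih =>
    have := hd (-(n : ℤ) - 1)
    rw [sub_add_cancel, ih] at this
    exact (mul_eq_zero.1 this.symm).resolve_left (ha _)

end IntRecurrence

section WeightedShift

variable {F V Γ : Type*} [Field F] [AddCommGroup V] [Module F V] {φ : Γ → Γ} {w : Γ → F} {r : F}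

lemma shiftW_apply (x : Γ → V) (α : Γ) : shiftW φ w x α = w α • x (φ α) := rfl

lemma ne_zero_of_mem_eigen {W : Type*} [AddCommGroup W] [Module F W] {T : W →ₗ[F] W}
    (hT : Injective T) (hr : r ∈ Eigen T) : r ≠ 0 := by
  rintro rfl
  obtain ⟨x, hx, hTx⟩ := hr
  exact hx (hT (by rw [hTx, zero_smul, map_zero]))

lemma prod_smul_iterate_of_shiftW_eq {x : Γ → V} (hx : shiftW φ w x = r • x) (α : Γ) (n : ℕ) :
    (∏ i ∈ Finset.range n, w (φ^[i] α)) • x (φ^[n] α) = r ^ n • x α := by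
  induction n with
  | zero => simp
  | succ n ih =>
    have hstep : w (φ^[n] α) • x (φ (φ^[n] α)) = r • x (φ^[n] α) := congrFun hx (φ^[n] α)
    rw [Finset.prod_range_succ, iterate_succ_apply', mul_smul, hstep, smul_comm, ih,
      smul_smul, ← pow_succ']

lemma prod_weight_eq_pow_of_shiftW_eq {x : Γ → V} (hx : shiftW φ w x = r • x) {α : Γ}
    (hα : x α ≠ 0) {n : ℕ} (hn : φ^[n] α = α) : ∏ i ∈ Finset.range n, w (φ^[i] α) = r ^ n :=
  smul_left_injective F hα (by simpa only [hn] using prod_smul_iterate_of_shiftW_eq hx α n)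

lemma mem_eigen_shiftW_of_orbit {ι : Type*} (j : ι → Γ) (s : ι → ι)
    (hjs : ∀ i, φ (j i) = j (s i)) (hpre : φ ⁻¹' range j ⊆ range j) (y : ι → V)
    (hy : FactorsThrough y j) (hys : ∀ i, w (j i) • y (s i) = r • y i) {i₀ : ι}
    (hi₀ : y i₀ ≠ 0) : r ∈ Eigen (shiftW (V := V) φ w) := by
  refine ⟨extend j y 0, fun h0 => hi₀ ?_, funext fun α => ?_⟩
  · rw [← hy.extend_apply 0 i₀, h0, Pi.zero_apply]
  rw [shiftW_apply, Pi.smul_apply]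
  by_cases hα : α ∈ range j
  · obtain ⟨i, rfl⟩ := hα
    rw [hjs, hy.extend_apply, hy.extend_apply, hys]
  · have hφα : φ α ∉ range j := fun h => hα (hpre h)
    rw [extend_apply' _ _ _ hφα, extend_apply' _ _ _ hα]
    simp only [Pi.zero_apply, smul_zero]

variable [Nontrivial V]

lemma weight_ne_zero_of_surjective_shiftW (h : Surjective (shiftW (V := V) φ w)) (α : Γ) :
    w α ≠ 0 := by
  classical
  obtain ⟨v, hv⟩ := exists_ne (0 : V)
  obtain ⟨x, hx⟩ := h (Pi.single α v)
  intro hw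
  have hα := congrFun hx α
  rw [shiftW_apply, hw, zero_smul, Pi.single_eq_same] at hα
  exact hv hα.symm

lemma injective_of_surjective_shiftW (h : Surjective (shiftW (V := V) φ w)) : Injective φ := by
  classical
  intro a b hab
  by_contra hne
  obtain ⟨v, hv⟩ := exists_ne (0 : V)
  obtain ⟨x, hx⟩ := h (Pi.single a v)
  have ha := congrFun hx a
  have hb := congrFun hx b
  rw [shiftW_apply, Pi.single_eq_same] at ha
  rw [shiftW_apply, Pi.single_eq_of_ne (Ne.symm hne),
    smul_eq_zero_iff_right (weight_ne_zero_of_surjective_shiftW h b)] at hb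
  rw [hab, hb, smul_zero] at ha
  exact hv ha.symm

lemma surjective_of_injective_shiftW (h : Injective (shiftW (V := V) φ w)) : Surjective φ := by
  classical
  intro γ
  by_contra! hγ
  obtain ⟨v, hv⟩ := exists_ne (0 : V)
  have hker : shiftW (V := V) φ w (Pi.single γ v) = shiftW φ w 0 := funext fun α => by
    rw [shiftW_apply, Pi.single_eq_of_ne (hγ α), smul_zero, map_zero, Pi.zero_apply]
  exact hv (by simpa using h hker)

theorem mem_eigen_shiftW_of_prod_eq_pow (hφ : Bijective φ) (hw : ∀ α, w α ≠ 0)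
    (hr : r ≠ 0) (θ : Γ)
    (hθ : ∏ i ∈ Finset.range (minimalPeriod φ θ), w (φ^[i] θ) = r ^ minimalPeriod φ θ) :
    r ∈ Eigen (shiftW (V := V) φ w) := by
  set ψ : Equiv.Perm Γ := Equiv.ofBijective φ hφ
  set p := minimalPeriod φ θ
  let j : ℤ → Γ := fun n => (ψ ^ n) • θ
  have hj_succ (n : ℤ) : φ (j n) = j (n + 1) := by
    change φ ((ψ ^ n) • θ) = (ψ ^ (n + 1)) • θ
    rw [add_comm, zpow_one_add, mul_smul]
    rfl
  have hj_eq (m n : ℤ) : j m = j n ↔ (p : ℤ) ∣ m - n :=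
    MulAction.zpow_smul_eq_zpow_smul_iff ψ m n
  have hj_nat (i : ℕ) : j i = φ^[i] θ := by
    simp only [j, zpow_natCast, Equiv.Perm.smul_def, Equiv.Perm.coe_pow]; rfl
  let a : ℤ → F := fun n => r / w (j n)
  have ha (n : ℤ) : a n ≠ 0 := div_ne_zero hr (hw _)
  obtain ⟨c, hc0, hc⟩ := exists_int_seq_succ_eq_mul ha
  have hcp : Periodic c p := by
    refine periodic_of_succ_eq_mul ha hc (fun n => ?_) ?_
    · simp only [a, (hj_eq (n + p) n).2 ⟨1, by ring⟩]
    · simp only [a, hj_nat, Finset.prod_div_distrib, Finset.prod_const, Finset.card_range, ← hθ]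
      exact div_self (hθ ▸ pow_ne_zero _ hr)
  obtain ⟨v, hv⟩ := exists_ne (0 : V)
  refine mem_eigen_shiftW_of_orbit j (· + 1) hj_succ ?_ (fun n => c n • v) ?_ (fun n => ?_)
    (i₀ := 0) (by rwa [hc0, one_smul])
  · rintro α ⟨n, hn⟩
    exact ⟨n - 1, hφ.1 (by rw [hj_succ, sub_add_cancel, hn])⟩
  · intro m n hmn
    obtain ⟨k, hk⟩ := (hj_eq m n).1 hmn
    have hperiod : c (n + k * p) = c n := by simpa only [Int.cast_id] using hcp.int_mul k n
    change c m • v = c n • v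
    rw [show m = n + k * p by linarith, hperiod]
  · simp only [hc, smul_smul, a]
    congr 1
    field_simp [hw (j n)]

end WeightedShift

theorem eigen_of_isomorphic_weighted_generalized_shift_general
    {F V Γ : Type*} [Field F] [AddCommGroup V] [Module F V] [Nontrivial V]
    (φ : Γ → Γ) (w : Γ → F) (h : Function.Bijective (shiftW (V := V) φ w)) :
    ((wanderSet φ).Nonempty → Eigen (shiftW (V := V) φ w) = {r : F | r ≠ 0}) ∧
    (wanderSet φ = ∅ →
      Eigen (shiftW (V := V) φ w) =
        {r : F | r ≠ 0 ∧ ∃ θ ∈ periodicSet φ,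
          ∏ i ∈ Finset.range (perOf φ θ), w (φ^[i] θ) = r ^ perOf φ θ}) := by
  have hw := weight_ne_zero_of_surjective_shiftW h.2
  have hφ : Bijective φ := ⟨injective_of_surjective_shiftW h.2, surjective_of_injective_shiftW h.1⟩
  refine ⟨fun ⟨β, hβ⟩ => ?_, fun hW => ?_⟩
  · refine Subset.antisymm (fun r hr => ne_zero_of_mem_eigen h.1 hr) fun r hr => ?_
    refine mem_eigen_shiftW_of_prod_eq_pow hφ hw hr β ?_
    rw [minimalPeriod_eq_zero_of_mem_wanderSet hβ, Finset.prod_range_zero, pow_zero]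
  ext r
  constructor
  · intro hr
    refine ⟨ne_zero_of_mem_eigen h.1 hr, ?_⟩
    obtain ⟨x, hx0, hx⟩ := hr
    obtain ⟨α, hα⟩ := Function.ne_iff.1 hx0
    have hαP : α ∈ periodicSet φ :=
      mem_periodicSet_of_notMem_wanderSet hφ.1 (hW ▸ notMem_empty α)
    exact ⟨α, hαP, prod_weight_eq_pow_of_shiftW_eq hx hα (Nat.sInf_mem hαP).2⟩
  · rintro ⟨hr, θ, hθ, hprod⟩
    rw [perOf_eq_minimalPeriod_s15 hθ] at hprod
    exact mem_eigen_shiftW_of_prod_eq_pow hφ hw hr θ hprod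

theorem eigen_of_isomorphic_weighted_generalized_shift
    {F V Γ : Type*} [Field F] [AddCommGroup V] [Module F V] [Nonempty Γ] [Nontrivial V]
    (φ : Γ → Γ) (w : Γ → F) (h : Function.Bijective (shiftW (V := V) φ w)) :
    ((wanderSet φ).Nonempty → Eigen (shiftW (V := V) φ w) = {r : F | r ≠ 0}) ∧
    (wanderSet φ = ∅ →
      Eigen (shiftW (V := V) φ w) =
        {r : F | r ≠ 0 ∧ ∃ θ ∈ periodicSet φ,
          ∏ i ∈ Finset.range (perOf φ θ), w (φ^[i] θ) = r ^ perOf φ θ}) :=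
  eigen_of_isomorphic_weighted_generalized_shift_general φ w h
end

section
/- For the generalized shift σ_φ : V^Γ → V^Γ: (1) if W(φ) = ∅ and Γ = φ(Γ), then Eigen(σ_φ, V^Γ) = {r ∈ F \ {0} : there exists θ ∈ P(φ) with o(r) | per(θ)}; (2) if W(φ) = ∅ and Γ ≠ φ(Γ), then Eigen(σ_φ, V^Γ) = {r ∈ F \ {0} : there exists θ ∈ P(φ) with o(r) | per(θ)} ∪ {0}; (3) if W(φ) ≠ ∅ and Γ = φ(Γ), then Eigen(σ_φ, V^Γ) = F \ {0}; (4) if W(φ) ≠ ∅ and Γ ≠ φ(Γ), then Eigen(σ_φ, V^Γ) = F. Here o(r) denotes the order of r in the multiplicative group F \ {0}. -/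
open Function Set

/-- The generalized shift `σ_φ` on `V^Γ`, sending `(x_α)_α` to `(x_{φ(α)})_α`. -/
noncomputable def shiftG (F : Type*) {V Γ : Type*} [Field F] [AddCommGroup V] [Module F V]
    (φ : Γ → Γ) : (Γ → V) →ₗ[F] (Γ → V) where
  toFun x := fun α => x (φ α)
  map_add' x y := by funext α; simp
  map_smul' c x := by funext α; simp

section Aux

variable {F V Γ : Type*} [Field F] [AddCommGroup V] [Module F V]

lemma shiftG_apply (φ : Γ → Γ) (x : Γ → V) (α : Γ) :
    shiftG F (V := V) φ x α = x (φ α) := rfl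

lemma eigen_iter {φ : Γ → Γ} {r : F} {x : Γ → V}
    (hx : shiftG F (V := V) φ x = r • x) (α : Γ) (k : ℕ) :
    x (φ^[k] α) = r ^ k • x α := by
  induction k with
  | zero => simp
  | succ k ih =>
    have h1 : x (φ (φ^[k] α)) = r • x (φ^[k] α) := congrFun hx (φ^[k] α)
    rw [Function.iterate_succ_apply', h1, ih, smul_smul, ← pow_succ']

lemma zpow_eq_of_dvd_sub {r : F} (hr : r ≠ 0) {p : ℕ} (hp : r ^ p = 1) {a b : ℤ}
    (h : (p : ℤ) ∣ b - a) : r ^ a = r ^ b := by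
  obtain ⟨k, hk⟩ := h
  have hb : b = a + (p : ℤ) * k := by linarith
  rw [hb, zpow_add₀ hr, zpow_mul, zpow_natCast, hp, one_zpow, mul_one]

lemma perOf_eq_minimalPeriod_s16 {φ : Γ → Γ} {θ : Γ} (hθ : θ ∈ periodicSet φ) :
    perOf φ θ = Function.minimalPeriod φ θ := by
  obtain ⟨n, hn1, hn2⟩ := hθ
  have hne : {n : ℕ | 1 ≤ n ∧ φ^[n] θ = θ}.Nonempty := ⟨n, hn1, hn2⟩
  have hmem := Nat.sInf_mem hne
  have hper : θ ∈ Function.periodicPts φ := ⟨n, hn1, hn2⟩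
  apply le_antisymm
  · exact Nat.sInf_le ⟨Function.minimalPeriod_pos_of_mem_periodicPts hper,
      Function.isPeriodicPt_minimalPeriod φ θ⟩
  · exact Function.IsPeriodicPt.minimalPeriod_le hmem.1 hmem.2

lemma dvd_of_iterate_fixed {φ : Γ → Γ} {θ : Γ} (hθ : θ ∈ periodicSet φ) {k : ℕ}
    (hk : φ^[k] θ = θ) : perOf φ θ ∣ k := by
  rw [perOf_eq_minimalPeriod_s16 hθ]
  exact Function.IsPeriodicPt.minimalPeriod_dvd hk

lemma perOf_spec {φ : Γ → Γ} {θ : Γ} (hθ : θ ∈ periodicSet φ) :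
    1 ≤ perOf φ θ ∧ φ^[perOf φ θ] θ = θ := by
  obtain ⟨n, hn1, hn2⟩ := hθ
  have hne : {m : ℕ | 1 ≤ m ∧ φ^[m] θ = θ}.Nonempty := ⟨n, hn1, hn2⟩
  exact Nat.sInf_mem hne

lemma mem_eigen_of_periodic [Nontrivial V] {φ : Γ → Γ} {r : F} (hr : r ≠ 0) {θ : Γ}
    (hθ : θ ∈ periodicSet φ) (hpow : r ^ (perOf φ θ) = 1) :
    r ∈ Eigen (shiftG F (V := V) φ) := by
  classical
  obtain ⟨v, hv⟩ := exists_ne (0 : V)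
  set p := perOf φ θ with hpdef
  obtain ⟨hp1, hpθ⟩ := perOf_spec hθ
  have key : ∀ (α : Γ) (n n' : ℕ), φ^[n] α = θ → φ^[n'] α = θ →
      ((p : ℤ) ∣ (n' : ℤ) - (n : ℤ)) := by
    have base : ∀ (α : Γ) (n n' : ℕ), n ≤ n' → φ^[n] α = θ → φ^[n'] α = θ →
        ((p : ℤ) ∣ (n' : ℤ) - (n : ℤ)) := by
      intro α n n' hle h1 h2
      have hfix : φ^[n' - n] θ = θ := by
        conv_lhs => rw [← h1]
        rw [← Function.iterate_add_apply, Nat.sub_add_cancel hle, h2]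
      have hdvd : p ∣ n' - n := dvd_of_iterate_fixed hθ hfix
      have : ((n' - n : ℕ) : ℤ) = (n' : ℤ) - n := by
        rw [Nat.cast_sub hle]
      rw [← this]
      exact_mod_cast hdvd
    intro α n n' h1 h2
    rcases le_total n n' with hle | hle
    · exact base α n n' hle h1 h2
    · exact dvd_sub_comm.mp (base α n' n hle h2 h1)
  set x : Γ → V := fun α =>
    if h : ∃ n : ℕ, φ^[n] α = θ then r ^ (-(Nat.find h : ℤ)) • v else 0 with hxdef
  have hxθ : x θ ≠ 0 := by
    have h0 : ∃ n : ℕ, φ^[n] θ = θ := ⟨0, rfl⟩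
    have : x θ = r ^ (-(Nat.find h0 : ℤ)) • v := by
      rw [hxdef]; exact dif_pos h0
    rw [this]
    exact smul_ne_zero (zpow_ne_zero _ hr) hv
  refine ⟨x, fun h0 => hxθ (by rw [h0]; rfl), ?_⟩
  funext α
  show x (φ α) = r • x α
  by_cases h : ∃ n : ℕ, φ^[n] α = θ
  · obtain ⟨n0, hn0⟩ := h
    have h' : ∃ m : ℕ, φ^[m] (φ α) = θ := by
      refine ⟨n0 + p - 1, ?_⟩
      have : φ^[(n0 + p - 1) + 1] α = θ := by
        have he : (n0 + p - 1) + 1 = p + n0 := by omega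
        rw [he, Function.iterate_add_apply, hn0, hpθ]
      rwa [Function.iterate_succ_apply] at this
    have hα : ∃ n : ℕ, φ^[n] α = θ := ⟨n0, hn0⟩
    have hxφ : x (φ α) = r ^ (-(Nat.find h' : ℤ)) • v := by
      rw [hxdef]; exact dif_pos h'
    have hxα : x α = r ^ (-(Nat.find hα : ℤ)) • v := by
      rw [hxdef]; exact dif_pos hα
    have hspec' : φ^[Nat.find h' + 1] α = θ := by
      rw [Function.iterate_succ_apply]; exact Nat.find_spec h'
    have hspec : φ^[Nat.find hα] α = θ := Nat.find_spec hα
    have hdvd := key α (Nat.find hα) (Nat.find h' + 1) hspec hspec'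
    have hzs : r ^ (-(Nat.find h' : ℤ)) = r ^ (1 - (Nat.find hα : ℤ)) := by
      apply zpow_eq_of_dvd_sub hr hpow
      push_cast at hdvd
      have heq2 : (1 : ℤ) - (Nat.find hα : ℤ) - (-(Nat.find h' : ℤ))
          = ((Nat.find h' : ℤ) + 1) - (Nat.find hα : ℤ) := by ring
      rw [heq2]
      exact hdvd
    rw [hxφ, hxα, hzs, sub_eq_add_neg, zpow_add₀ hr, zpow_one, mul_smul]
  · have h' : ¬ ∃ m : ℕ, φ^[m] (φ α) = θ := by
      rintro ⟨m, hm⟩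
      exact h ⟨m + 1, by rwa [Function.iterate_succ_apply]⟩
    have hxφ : x (φ α) = 0 := by rw [hxdef]; exact dif_neg h'
    have hxα : x α = 0 := by rw [hxdef]; exact dif_neg h
    rw [hxφ, hxα, smul_zero]

lemma mem_eigen_of_wandering [Nontrivial V] {φ : Γ → Γ} {r : F} (hr : r ≠ 0) {w : Γ}
    (hw : w ∈ wanderSet φ) : r ∈ Eigen (shiftG F (V := V) φ) := by
  classical
  obtain ⟨v, hv⟩ := exists_ne (0 : V)
  have hinj : Function.Injective fun n : ℕ => φ^[n] w := by
    intro n m h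
    have h1 : φ^[n + 1] w = φ^[m + 1] w := by
      rw [Function.iterate_succ_apply', Function.iterate_succ_apply']
      exact congrArg φ h
    exact hw h1
  have key : ∀ (α : Γ) (n m n' m' : ℕ), φ^[n] α = φ^[m] w → φ^[n'] α = φ^[m'] w →
      (m : ℤ) - n = (m' : ℤ) - n' := by
    have base : ∀ (α : Γ) (n m n' m' : ℕ), n ≤ n' →
        φ^[n] α = φ^[m] w → φ^[n'] α = φ^[m'] w → (m : ℤ) - n = (m' : ℤ) - n' := by
      intro α n m n' m' hle h1 h2
      have hiter : φ^[(n' - n) + m] w = φ^[m'] w := by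
        rw [Function.iterate_add_apply, ← h1, ← Function.iterate_add_apply,
          Nat.sub_add_cancel hle, h2]
      have := hinj hiter
      omega
    intro α n m n' m' h1 h2
    rcases le_total n n' with hle | hle
    · exact base α n m n' m' hle h1 h2
    · exact (base α n' m' n m hle h2 h1).symm
  set x : Γ → V := fun α =>
    if h : ∃ q : ℕ × ℕ, φ^[q.1] α = φ^[q.2] w then
      r ^ (((Classical.choose h).2 : ℤ) - ((Classical.choose h).1 : ℤ)) • v else 0 with hxdef
  have hxw : x w ≠ 0 := by
    have h0 : ∃ q : ℕ × ℕ, φ^[q.1] w = φ^[q.2] w := ⟨(0, 0), rfl⟩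
    have hx : x w = r ^ (((Classical.choose h0).2 : ℤ) - ((Classical.choose h0).1 : ℤ)) • v := by
      rw [hxdef]; exact dif_pos h0
    have hspec := Classical.choose_spec h0
    have heq : (Classical.choose h0).1 = (Classical.choose h0).2 := hinj hspec
    rw [hx, heq, sub_self, zpow_zero, one_smul]
    exact hv
  refine ⟨x, fun h0 => hxw (by rw [h0]; rfl), ?_⟩
  funext α
  show x (φ α) = r • x α
  by_cases h : ∃ q : ℕ × ℕ, φ^[q.1] α = φ^[q.2] w
  · obtain ⟨⟨n0, m0⟩, hq⟩ := h
    have h' : ∃ q : ℕ × ℕ, φ^[q.1] (φ α) = φ^[q.2] w := by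
      refine ⟨(n0, m0 + 1), ?_⟩
      show φ^[n0] (φ α) = φ^[m0 + 1] w
      rw [← Function.iterate_succ_apply, Function.iterate_succ_apply', hq,
        Function.iterate_succ_apply']
    have hα : ∃ q : ℕ × ℕ, φ^[q.1] α = φ^[q.2] w := ⟨(n0, m0), hq⟩
    have hxφ : x (φ α)
        = r ^ (((Classical.choose h').2 : ℤ) - ((Classical.choose h').1 : ℤ)) • v := by
      rw [hxdef]; exact dif_pos h'
    have hxα : x α
        = r ^ (((Classical.choose hα).2 : ℤ) - ((Classical.choose hα).1 : ℤ)) • v := by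
      rw [hxdef]; exact dif_pos hα
    have hspec' : φ^[(Classical.choose h').1 + 1] α = φ^[(Classical.choose h').2] w := by
      rw [Function.iterate_succ_apply]; exact Classical.choose_spec h'
    have hspec : φ^[(Classical.choose hα).1] α = φ^[(Classical.choose hα).2] w :=
      Classical.choose_spec hα
    have heq := key α (Classical.choose hα).1 (Classical.choose hα).2
      ((Classical.choose h').1 + 1) (Classical.choose h').2 hspec hspec'
    have hexp : ((Classical.choose h').2 : ℤ) - ((Classical.choose h').1 : ℤ)
        = (((Classical.choose hα).2 : ℤ) - ((Classical.choose hα).1 : ℤ)) + 1 := by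
      push_cast at heq ⊢
      omega
    rw [hxφ, hxα, hexp, zpow_add₀ hr, zpow_one, mul_comm, mul_smul]
  · have h' : ¬ ∃ q : ℕ × ℕ, φ^[q.1] (φ α) = φ^[q.2] w := by
      rintro ⟨⟨n0, m0⟩, hq⟩
      refine h ⟨(n0 + 1, m0), ?_⟩
      show φ^[n0 + 1] α = φ^[m0] w
      rwa [Function.iterate_succ_apply]
    have hxφ : x (φ α) = 0 := by rw [hxdef]; exact dif_neg h'
    have hxα : x α = 0 := by rw [hxdef]; exact dif_neg h
    rw [hxφ, hxα, smul_zero]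

lemma zero_mem_eigen_of_not_surj [Nontrivial V] {φ : Γ → Γ}
    (hφ : ¬ Function.Surjective φ) : (0 : F) ∈ Eigen (shiftG F (V := V) φ) := by
  classical
  obtain ⟨v, hv⟩ := exists_ne (0 : V)
  have hex : ∃ b, ∀ a, φ a ≠ b := by
    by_contra h
    push_neg at h
    exact hφ fun b => h b
  obtain ⟨β, hβ⟩ := hex
  set x : Γ → V := fun γ => if γ = β then v else 0 with hxdef
  have hxβ : x β = v := by rw [hxdef]; simp
  refine ⟨x, fun h0 => hv (by rw [← hxβ, h0]; rfl), ?_⟩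
  funext α
  show x (φ α) = (0 : F) • x α
  rw [zero_smul, hxdef]
  simp only []
  rw [if_neg (hβ α)]

lemma zero_notMem_eigen_of_surj {φ : Γ → Γ} (hφ : Function.Surjective φ) :
    (0 : F) ∉ Eigen (shiftG F (V := V) φ) := by
  rintro ⟨x, hx0, hx⟩
  apply hx0
  funext γ
  obtain ⟨α, hα⟩ := hφ γ
  have : x (φ α) = (0 : F) • x α := congrFun hx α
  rw [hα, zero_smul] at this
  rw [this]; rfl

lemma eigen_necessity {φ : Γ → Γ} (hW : wanderSet φ = ∅) {r : F} (hr : r ≠ 0)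
    (hmem : r ∈ Eigen (shiftG F (V := V) φ)) :
    ∃ θ ∈ periodicSet φ, orderOf r ≠ 0 ∧ orderOf r ∣ perOf φ θ := by
  obtain ⟨x, hx0, hx⟩ := hmem
  have hα : ∃ α, x α ≠ 0 := by
    by_contra h
    push_neg at h
    exact hx0 (funext h)
  obtain ⟨α, hxα⟩ := hα
  have hαw : α ∉ wanderSet φ := by rw [hW]; exact Set.notMem_empty α
  have hni : ¬ Function.Injective fun n : ℕ => φ^[n + 1] α := hαw
  rw [Function.not_injective_iff] at hni
  obtain ⟨i, j, hij, hne⟩ := hni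
  wlog hlt : i < j generalizing i j
  · exact this j i hij.symm hne.symm (by omega)
  set θ := φ^[i + 1] α with hθdef
  have hper : φ^[j - i] θ = θ := by
    rw [hθdef, ← Function.iterate_add_apply]
    have : j - i + (i + 1) = j + 1 := by omega
    rw [this]
    exact hij.symm
  have hθmem : θ ∈ periodicSet φ := ⟨j - i, by omega, hper⟩
  refine ⟨θ, hθmem, ?_⟩
  obtain ⟨hp1, hpθ⟩ := perOf_spec hθmem
  have hxθ : x θ = r ^ (i + 1) • x α := eigen_iter hx α (i + 1)
  have hxθne : x θ ≠ 0 := by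
    rw [hxθ]
    exact smul_ne_zero (pow_ne_zero _ hr) hxα
  have hiter : x (φ^[perOf φ θ] θ) = r ^ (perOf φ θ) • x θ := eigen_iter hx θ _
  rw [hpθ] at hiter
  have hrp : r ^ (perOf φ θ) = 1 := by
    have : (r ^ (perOf φ θ) - 1) • x θ = 0 := by
      rw [sub_smul, one_smul, ← hiter, sub_self]
    rcases smul_eq_zero.mp this with h | h
    · exact sub_eq_zero.mp h
    · exact absurd h hxθne
  have hdvd : orderOf r ∣ perOf φ θ := orderOf_dvd_of_pow_eq_one hrp
  constructor
  · intro h0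
    rw [h0] at hdvd
    have := Nat.eq_zero_of_zero_dvd hdvd
    omega
  · exact hdvd

end Aux

theorem eigenvalues_of_generalized_shift
    {F V Γ : Type*} [Field F] [AddCommGroup V] [Module F V] [Nonempty Γ] [Nontrivial V]
    (φ : Γ → Γ) :
    (wanderSet φ = ∅ → Function.Surjective φ →
      Eigen (shiftG F (V := V) φ) =
        {r : F | r ≠ 0 ∧ ∃ θ ∈ periodicSet φ, orderOf r ≠ 0 ∧ orderOf r ∣ perOf φ θ}) ∧
    (wanderSet φ = ∅ → ¬ Function.Surjective φ →
      Eigen (shiftG F (V := V) φ) =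
        {r : F | r ≠ 0 ∧ ∃ θ ∈ periodicSet φ, orderOf r ≠ 0 ∧ orderOf r ∣ perOf φ θ}
          ∪ {0}) ∧
    ((wanderSet φ).Nonempty → Function.Surjective φ →
      Eigen (shiftG F (V := V) φ) = {r : F | r ≠ 0}) ∧
    ((wanderSet φ).Nonempty → ¬ Function.Surjective φ →
      Eigen (shiftG F (V := V) φ) = (Set.univ : Set F)) := by
  refine ⟨?_, ?_, ?_, ?_⟩
  · intro hW hsurj
    ext r
    constructor
    · intro hmem
      have hr : r ≠ 0 := by
        rintro rfl
        exact zero_notMem_eigen_of_surj hsurj hmem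
      exact ⟨hr, eigen_necessity hW hr hmem⟩
    · rintro ⟨hr, θ, hθ, hord, hdvd⟩
      exact mem_eigen_of_periodic hr hθ (orderOf_dvd_iff_pow_eq_one.mp hdvd)
  · intro hW hsurj
    ext r
    constructor
    · intro hmem
      by_cases hr : r = 0
      · exact Or.inr (by simp [hr])
      · exact Or.inl ⟨hr, eigen_necessity hW hr hmem⟩
    · rintro (⟨hr, θ, hθ, hord, hdvd⟩ | hr)
      · exact mem_eigen_of_periodic hr hθ (orderOf_dvd_iff_pow_eq_one.mp hdvd)
      · have : r = 0 := hr
        rw [this]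
        exact zero_mem_eigen_of_not_surj hsurj
  · intro hW hsurj
    obtain ⟨w, hw⟩ := hW
    ext r
    constructor
    · intro hmem
      rintro rfl
      exact zero_notMem_eigen_of_surj hsurj hmem
    · intro hr
      exact mem_eigen_of_wandering hr hw
  · intro hW hsurj
    obtain ⟨w, hw⟩ := hW
    ext r
    simp only [Set.mem_univ, iff_true]
    by_cases hr : r = 0
    · rw [hr]; exact zero_mem_eigen_of_not_surj hsurj
    · exact mem_eigen_of_wandering hr hw
end
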